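/- Let A and H be associative algebras equipped with a cocycle cross product system: bilinear maps ▷: A⊗H→H, ◁: H⊗A→H, ⇀: H⊗A→A, ↼: A⊗H→A, σ: H⊗H→A, θ: A⊗A→H satisfying conditions (CC1), (CC2), (CC5), (CC6) and (CP1)–(CP12). Then the cocycle cross product A_σ#_θ H, the vector space A ⊕ H with multiplication (a,x)(b,y) = (ab + x⇀b + a↼y + σ(x,y), xy + x◁b + a▷y + θ(a,b)), is an associative algebra. -/
import Mathlib


open TensorProduct BigOperators

section
variable {k A H : Type*} [Field k]
  [AddCommGroup A] [Module k A] [AddCommGroup H] [Module k H]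

/-- The cocycle cross product multiplication on `A ⊕ H`:
`(a,x)(b,y) = (ab + x⇀b + a↼y + σ(x,y), xy + x◁b + a▷y + θ(a,b))`. -/
def cocycleCrossMul (mA : A →ₗ[k] A →ₗ[k] A) (mH : H →ₗ[k] H →ₗ[k] H)
    (trir : A →ₗ[k] H →ₗ[k] H) (tril : H →ₗ[k] A →ₗ[k] H)
    (harpR : H →ₗ[k] A →ₗ[k] A) (harpL : A →ₗ[k] H →ₗ[k] A)
    (σ : H →ₗ[k] H →ₗ[k] A) (θ : A →ₗ[k] A →ₗ[k] H) :
    (A × H) → (A × H) → (A × H) := fun p q =>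
  (mA p.1 q.1 + harpR p.2 q.1 + harpL p.1 q.2 + σ p.2 q.2,
    mH p.2 q.2 + tril p.2 q.1 + trir p.1 q.2 + θ p.1 q.1)

/-- Given a cocycle cross product system (conditions (CC1), (CC2), (CC5), (CC6) and
(CP1)–(CP12)), the cocycle cross product `A_σ#_θ H` is an associative algebra. -/
theorem stmt8 (mA : A →ₗ[k] A →ₗ[k] A) (mH : H →ₗ[k] H →ₗ[k] H)
    (trir : A →ₗ[k] H →ₗ[k] H) (tril : H →ₗ[k] A →ₗ[k] H)
    (harpR : H →ₗ[k] A →ₗ[k] A) (harpL : A →ₗ[k] H →ₗ[k] A)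
    (σ : H →ₗ[k] H →ₗ[k] A) (θ : A →ₗ[k] A →ₗ[k] H)
    -- (CC1) σ(xy,z) + σ(x,y)↼z = x⇀σ(y,z) + σ(x,yz)
    (hCC1 : ∀ x y z : H, σ (mH x y) z + harpL (σ x y) z = harpR x (σ y z) + σ x (mH y z))
    -- (CC2) θ(ab,c) + θ(a,b)◁c = a▷θ(b,c) + θ(a,bc)
    (hCC2 : ∀ a b c : A, θ (mA a b) c + tril (θ a b) c = trir a (θ b c) + θ a (mA b c))
    -- (CC5) x(yz) + x◁σ(y,z) = (xy)z + σ(x,y)▷z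
    (hCC5 : ∀ x y z : H, mH x (mH y z) + tril x (σ y z) = mH (mH x y) z + trir (σ x y) z)
    -- (CC6) a(bc) + a↼θ(b,c) = (ab)c + θ(a,b)⇀c
    (hCC6 : ∀ a b c : A, mA a (mA b c) + harpL a (θ b c) = mA (mA a b) c + harpR (θ a b) c)
    -- (CP1) (ab)▷x + θ(a,b)x = a▷(b▷x) + θ(a, b↼x)
    (hCP1 : ∀ (a b : A) (x : H),
      trir (mA a b) x + mH (θ a b) x = trir a (trir b x) + θ a (harpL b x))
    -- (CP2) x◁(ab) + xθ(a,b) = (x◁a)◁b + θ(x⇀a, b)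
    (hCP2 : ∀ (x : H) (a b : A),
      tril x (mA a b) + mH x (θ a b) = tril (tril x a) b + θ (harpR x a) b)
    -- (CP3) (a▷x)◁b + θ(a↼x, b) = a▷(x◁b) + θ(a, x⇀b)
    (hCP3 : ∀ (a : A) (x : H) (b : A),
      tril (trir a x) b + θ (harpL a x) b = trir a (tril x b) + θ a (harpR x b))
    -- (CP4) a▷(xy) + θ(a, σ(x,y)) = (a▷x)y + (a↼x)▷y
    (hCP4 : ∀ (a : A) (x y : H),
      trir a (mH x y) + θ a (σ x y) = mH (trir a x) y + trir (harpL a x) y)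
    -- (CP5) (xy)◁a + θ(σ(x,y), a) = x◁(y⇀a) + x(y◁a)
    (hCP5 : ∀ (x y : H) (a : A),
      tril (mH x y) a + θ (σ x y) a = tril x (harpR y a) + mH x (tril y a))
    -- (CP6) (x◁a)y + (x⇀a)▷y = x(a▷y) + x◁(a↼y)
    (hCP6 : ∀ (x : H) (a : A) (y : H),
      mH (tril x a) y + trir (harpR x a) y = mH x (trir a y) + tril x (harpL a y))
    -- (CP7) (xy)⇀a + σ(x,y)a = x⇀(y⇀a) + σ(x, y◁a)
    (hCP7 : ∀ (x y : H) (a : A),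
      harpR (mH x y) a + mA (σ x y) a = harpR x (harpR y a) + σ x (tril y a))
    -- (CP8) a↼(xy) + aσ(x,y) = (a↼x)↼y + σ(a▷x, y)
    (hCP8 : ∀ (a : A) (x y : H),
      harpL a (mH x y) + mA a (σ x y) = harpL (harpL a x) y + σ (trir a x) y)
    -- (CP9) (x⇀a)↼y + σ(x◁a, y) = x⇀(a↼y) + σ(x, a▷y)
    (hCP9 : ∀ (x : H) (a : A) (y : H),
      harpL (harpR x a) y + σ (tril x a) y = harpR x (harpL a y) + σ x (trir a y))
    -- (CP10) x⇀(ab) + σ(x, θ(a,b)) = (x⇀a)b + (x◁a)⇀b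
    (hCP10 : ∀ (x : H) (a b : A),
      harpR x (mA a b) + σ x (θ a b) = mA (harpR x a) b + harpR (tril x a) b)
    -- (CP11) (ab)↼x + σ(θ(a,b), x) = a(b↼x) + a↼(b▷x)
    (hCP11 : ∀ (a b : A) (x : H),
      harpL (mA a b) x + σ (θ a b) x = mA a (harpL b x) + harpL a (trir b x))
    -- (CP12) (a↼x)b + (a▷x)⇀b = a(x⇀b) + a↼(x◁b)
    (hCP12 : ∀ (a : A) (x : H) (b : A),
      mA (harpL a x) b + harpR (trir a x) b = mA a (harpR x b) + harpL a (tril x b)) :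
    ∀ p q r : A × H,
      cocycleCrossMul mA mH trir tril harpR harpL σ θ
          (cocycleCrossMul mA mH trir tril harpR harpL σ θ p q) r
        = cocycleCrossMul mA mH trir tril harpR harpL σ θ p
            (cocycleCrossMul mA mH trir tril harpR harpL σ θ q r) := by
  rintro ⟨a, x⟩ ⟨b, y⟩ ⟨c, z⟩
  simp only [cocycleCrossMul, map_add, LinearMap.add_apply, Prod.mk.injEq]
  constructor
  · linear_combination (norm := abel) -hCC6 a b c + hCP12 a y c + hCP11 a b z - hCP8 a y z -
      hCP10 x b c + hCP7 x y c + hCP9 x b z + hCC1 x y z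
  · linear_combination (norm := abel) -hCC5 x y z + hCP6 x b z - hCP4 a y z + hCP1 a b z +
      hCP5 x y c - hCP2 x b c + hCP3 a y c + hCC2 a b c


end
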